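/- arXiv:2501.12843 — 8 statements merged into one kernel-verified Lean document; each statement's English description precedes it below -/
import Mathlib

section
/- Let p, n, v ∈ ℝⁿ with ‖n‖ = 1, ‖v‖ = 1 and ⟨p, n⟩ = 0, and let v' := v − 2⟨v, n⟩ • n be the billiard reflection of v in the hyperplane with unit normal n. Then the distance from the line {p + t • v : t ∈ ℝ} to the origin equals the distance from the line {p + t • v' : t ∈ ℝ} to the origin, i.e. Metric.infDist 0 {x | ∃ t : ℝ, x = p + t • v} = Metric.infDist 0 {x | ∃ t : ℝ, x = p + t • v'}. (Consequently, spheres centered at the vertex of a cone are caustics of the billiard inside the cone: the condition ⟨p, n⟩ = 0 expresses that n is a normal to a cone with vertex at the origin at the point p.) -/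
open RealInnerProductSpace

/-- The billiard reflection at a point `p` of a cone with vertex at the origin
(so that the unit normal `n` satisfies `⟪p, n⟫ = 0`) preserves the distance
from the line to the origin. -/
theorem dist_line_reflect_eq {n : ℕ} (p nv v : EuclideanSpace ℝ (Fin n))
    (hn : ‖nv‖ = 1) (hv : ‖v‖ = 1) (hpn : ⟪p, nv⟫ = 0) :
    Metric.infDist 0 {x | ∃ t : ℝ, x = p + t • v} =
      Metric.infDist 0 {x | ∃ t : ℝ, x = p + t • (v - (2 * ⟪v, nv⟫) • nv)} := by
  set v' := v - (2 * ⟪v, nv⟫) • nv with hv'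
  have hpv' : ⟪p, v'⟫ = ⟪p, v⟫ := by
    simp [hv', inner_sub_right, inner_smul_right, hpn]
  have hnv' : ‖v'‖ ^ 2 = 1 := by
    have h := norm_sub_sq_real v ((2 * ⟪v, nv⟫) • nv)
    rw [← hv'] at h
    rw [h, inner_smul_right, norm_smul, mul_pow, hv, hn]
    rw [Real.norm_eq_abs, sq_abs]
    ring
  have key : ∀ t : ℝ, ‖p + t • v‖ = ‖p + t • v'‖ := by
    intro t
    have h1 : ‖p + t • v‖ ^ 2 = ‖p + t • v'‖ ^ 2 := by
      rw [norm_add_sq_real, norm_add_sq_real, inner_smul_right, inner_smul_right,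
        hpv', norm_smul, norm_smul, mul_pow, mul_pow, hv, hnv']
      norm_num
    nlinarith [norm_nonneg (p + t • v), norm_nonneg (p + t • v')]
  have hne1 : {x | ∃ t : ℝ, x = p + t • v}.Nonempty := ⟨p + (0:ℝ) • v, 0, rfl⟩
  have hne2 : {x | ∃ t : ℝ, x = p + t • v'}.Nonempty := ⟨p + (0:ℝ) • v', 0, rfl⟩
  haveI := hne1.to_subtype
  haveI := hne2.to_subtype
  apply le_antisymm
  · rw [Metric.infDist_eq_iInf (s := {x | ∃ t : ℝ, x = p + t • v'})]
    apply le_ciInf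
    rintro ⟨y, t, rfl⟩
    calc Metric.infDist 0 {x | ∃ t : ℝ, x = p + t • v} ≤ dist 0 (p + t • v) :=
          Metric.infDist_le_dist_of_mem ⟨t, rfl⟩
      _ = dist 0 (p + t • v') := by simp only [dist_zero_left]; exact key t
  · rw [Metric.infDist_eq_iInf (s := {x | ∃ t : ℝ, x = p + t • v})]
    apply le_ciInf
    rintro ⟨y, t, rfl⟩
    calc Metric.infDist 0 {x | ∃ t : ℝ, x = p + t • v'} ≤ dist 0 (p + t • v') :=
          Metric.infDist_le_dist_of_mem ⟨t, rfl⟩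
      _ = dist 0 (p + t • v) := by simp only [dist_zero_left]; exact (key t).symm
end

section
/- Let p, n, v ∈ ℝⁿ with ‖n‖ = 1, ‖v‖ = 1 and ⟨p, n⟩ = 0, and let v' := v − 2⟨v, n⟩ • n. Then ∑_{i < j} (p i · v' j − p j · v' i)² = ∑_{i < j} (p i · v j − p j · v i)², where the sums are over all pairs of indices 0 ≤ i < j ≤ n−1. (This says the function I = ∑_{i<j} m_{i,j}², with m_{i,j} = xⁱvʲ − xʲvⁱ, is a first integral of the Birkhoff billiard inside a cone with vertex at the origin: the condition ⟨p, n⟩ = 0 expresses that n is a normal to the cone at the reflection point p.) -/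
open RealInnerProductSpace

lemma lagrange {n : ℕ} (p v : Fin n → ℝ) :
    (∑ i : Fin n, ∑ j : Fin n,
        (if i < j then (p i * v j - p j * v i) ^ 2 else 0)) =
    (∑ i, p i ^ 2) * (∑ i, v i ^ 2) - (∑ i, p i * v i) ^ 2 := by
  set S := ∑ i : Fin n, ∑ j : Fin n,
      (if i < j then (p i * v j - p j * v i) ^ 2 else 0) with hS
  have key : ∀ i j : Fin n, (p i * v j - p j * v i) ^ 2 =
      (if i < j then (p i * v j - p j * v i) ^ 2 else 0) +
      (if j < i then (p i * v j - p j * v i) ^ 2 else 0) := by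
    intro i j
    rcases lt_trichotomy i j with h | h | h
    · simp [h, not_lt_of_gt h]
    · subst h; simp
    · simp [h, not_lt_of_gt h]
  have hswap : (∑ i : Fin n, ∑ j : Fin n,
      (if j < i then (p i * v j - p j * v i) ^ 2 else 0)) = S := by
    rw [hS, Finset.sum_comm]
    refine Finset.sum_congr rfl fun i _ => Finset.sum_congr rfl fun j _ => ?_
    congr 1
    ring
  have step : (∑ i : Fin n, ∑ j : Fin n, (p i * v j - p j * v i) ^ 2) =
      S + ∑ i : Fin n, ∑ j : Fin n,
        (if j < i then (p i * v j - p j * v i) ^ 2 else 0) := by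
    rw [hS, ← Finset.sum_add_distrib]
    refine Finset.sum_congr rfl fun i _ => ?_
    rw [← Finset.sum_add_distrib]
    exact Finset.sum_congr rfl fun j _ => key i j
  rw [hswap] at step
  have full : (∑ i : Fin n, ∑ j : Fin n, (p i * v j - p j * v i) ^ 2) =
      2 * ((∑ i, p i ^ 2) * (∑ i, v i ^ 2) - (∑ i, p i * v i) ^ 2) := by
    have expand : ∀ i j : Fin n, (p i * v j - p j * v i) ^ 2 =
        p i ^ 2 * v j ^ 2 + v i ^ 2 * p j ^ 2 - 2 * ((p i * v i) * (p j * v j)) := by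
      intro i j; ring
    calc (∑ i : Fin n, ∑ j : Fin n, (p i * v j - p j * v i) ^ 2)
        = ∑ i : Fin n, ∑ j : Fin n,
            (p i ^ 2 * v j ^ 2 + v i ^ 2 * p j ^ 2 - 2 * ((p i * v i) * (p j * v j))) :=
          Finset.sum_congr rfl fun i _ => Finset.sum_congr rfl fun j _ => expand i j
      _ = 2 * ((∑ i, p i ^ 2) * (∑ i, v i ^ 2) - (∑ i, p i * v i) ^ 2) := by
          simp only [Finset.sum_add_distrib, Finset.sum_sub_distrib, ← Finset.mul_sum,
            ← Finset.sum_mul]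
          ring
  have : S + S = 2 * ((∑ i, p i ^ 2) * (∑ i, v i ^ 2) - (∑ i, p i * v i) ^ 2) := by
    rw [← step, full]
  linarith

/-- The quantity `I = ∑_{i<j} (xⁱvʲ − xʲvⁱ)²` is invariant under billiard
reflection at a point `p` of a cone with vertex at the origin (so `⟪p, n⟫ = 0`). -/
theorem sum_sq_minors_reflect_eq {n : ℕ} (p nv v : EuclideanSpace ℝ (Fin n))
    (hn : ‖nv‖ = 1) (hv : ‖v‖ = 1) (hpn : ⟪p, nv⟫ = 0) :
    ∑ i : Fin n, ∑ j : Fin n,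
        (if i < j then
          (p i * (v - (2 * ⟪v, nv⟫) • nv) j - p j * (v - (2 * ⟪v, nv⟫) • nv) i) ^ 2
        else 0) =
      ∑ i : Fin n, ∑ j : Fin n,
        (if i < j then (p i * v j - p j * v i) ^ 2 else 0) := by
  set c : ℝ := 2 * ⟪v, nv⟫ with hc
  have hinner : ∀ x y : EuclideanSpace ℝ (Fin n), ⟪x, y⟫ = ∑ i, x i * y i := by
    intro x y
    simp [PiLp.inner_apply, mul_comm]
  have happ : ∀ i, (v - c • nv) i = v i - c * nv i := by
    intro i; simp
  have hnv2 : (∑ i, nv i ^ 2) = 1 := by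
    have := real_inner_self_eq_norm_sq nv
    rw [hinner] at this
    simp_rw [← sq] at this
    rw [this, hn]; norm_num
  have hvn : (∑ i, v i * nv i) = ⟪v, nv⟫ := (hinner v nv).symm
  have hpnv : (∑ i, p i * nv i) = 0 := by rw [← hinner]; exact hpn
  rw [lagrange, lagrange]
  have h1 : (∑ i, (v - c • nv) i ^ 2) = ∑ i, v i ^ 2 := by
    have : ∀ i, (v - c • nv) i ^ 2 =
        v i ^ 2 - 2 * c * (v i * nv i) + c ^ 2 * nv i ^ 2 := by
      intro i; rw [happ]; ring
    simp_rw [this, Finset.sum_add_distrib, Finset.sum_sub_distrib, ← Finset.mul_sum,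
      hvn, hnv2, hc]
    ring
  have h2 : (∑ i, p i * (v - c • nv) i) = ∑ i, p i * v i := by
    have : ∀ i, p i * (v - c • nv) i = p i * v i - c * (p i * nv i) := by
      intro i; rw [happ]; ring
    simp_rw [this, Finset.sum_sub_distrib, ← Finset.mul_sum, hpnv]
    ring
  rw [h1, h2]
end

section
/- Let p, p' ∈ ℝⁿ be nonzero with p ≠ p', let n ∈ ℝⁿ with ‖n‖ = 1 and ⟨n, p'⟩ = 0, and set v := ‖p' − p‖⁻¹ • (p' − p) and v' := v − 2⟨v, n⟩ • n. Then angle(v', p') = angle(v, p) − angle(p, p'). (This is the one-step angle law for billiard reflection at a point p' of a cone with vertex at the origin: the angle the outgoing direction makes with the position vector of the reflection point equals the angle the incoming direction makes with the position vector of the previous point, minus the angle subtended at the vertex.) -/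
/-!
The map `x ↦ x - 2⟪x, nv⟫ nv` is the reflection in the hyperplane `nv^⊥`, a linear isometry
fixing `p'`, so `angle(v', p') = angle(v, p')`. Since `v` is a positive multiple of `p' - p`,
the claim becomes the exterior angle theorem for the triangle `0, p, p'`: the exterior angle
`angle(p' - p, p)` at `p` is the sum `angle(p, p') + angle(p' - p, p')` of the interior angles
at `0` and `p'`.
-/

open InnerProductGeometry RealInnerProductSpace Submodule

section

variable {V : Type*} [NormedAddCommGroup V] [InnerProductSpace ℝ V]

theorem reflection_orthogonalComplement_singleton_apply_of_norm_eq_one {u : V} (hu : ‖u‖ = 1)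
    (x : V) : reflection (ℝ ∙ u)ᗮ x = x - (2 * ⟪x, u⟫) • u := by
  rw [reflection_orthogonal_apply, reflection_singleton_apply, hu, real_inner_comm, mul_smul]
  simp only [RCLike.ofReal_one, one_pow, div_one]
  module

theorem angle_sub_two_inner_smul_of_inner_eq_zero {u y : V} (hu : ‖u‖ = 1) (huy : ⟪u, y⟫ = 0)
    (x : V) : angle (x - (2 * ⟪x, u⟫) • u) y = angle x y := by
  have hy : reflection (ℝ ∙ u)ᗮ y = y :=
    reflection_mem_subspace_eq_self (mem_orthogonal_singleton_iff_inner_right.2 huy)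
  rw [← reflection_orthogonalComplement_singleton_apply_of_norm_eq_one hu]
  conv_lhs => rw [← hy]
  exact (reflection (ℝ ∙ u)ᗮ).toLinearIsometry.angle_map x y

theorem angle_sub_left_eq_angle_add_angle (x : V) {y : V} (hy : y ≠ 0) :
    angle (y - x) x = angle x y + angle (y - x) y := by
  have hsum := angle_add_angle_sub_add_angle_sub_eq_pi x hy
  rw [← neg_sub y x, angle_neg_right] at hsum
  rw [angle_comm (y - x) x, angle_comm (y - x) y]
  linarith

end

theorem angle_reflected_eq_general {n : ℕ} (p p' nv : EuclideanSpace ℝ (Fin n))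
    (hp' : p' ≠ 0) (hne : p ≠ p')
    (hn : ‖nv‖ = 1) (hnp' : ⟪nv, p'⟫ = 0) :
    angle ((‖p' - p‖⁻¹ • (p' - p)) -
        (2 * ⟪‖p' - p‖⁻¹ • (p' - p), nv⟫) • nv) p' =
      angle (‖p' - p‖⁻¹ • (p' - p)) p - angle p p' := by
  have hscale : 0 < ‖p' - p‖⁻¹ := inv_pos.2 (norm_pos_iff.2 (sub_ne_zero.2 hne.symm))
  rw [angle_sub_two_inner_smul_of_inner_eq_zero hn hnp', angle_smul_left_of_pos _ _ hscale,
    angle_smul_left_of_pos _ _ hscale, angle_sub_left_eq_angle_add_angle p hp']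
  ring

/-- One-step angle law for billiard reflection at a point `p'` of a cone with
vertex at the origin: `angle(v', p') = angle(v, p) − angle(p, p')`. -/
theorem angle_reflected_eq {n : ℕ} (p p' nv : EuclideanSpace ℝ (Fin n))
    (hp : p ≠ 0) (hp' : p' ≠ 0) (hne : p ≠ p')
    (hn : ‖nv‖ = 1) (hnp' : ⟪nv, p'⟫ = 0) :
    angle ((‖p' - p‖⁻¹ • (p' - p)) -
        (2 * ⟪‖p' - p‖⁻¹ • (p' - p), nv⟫) • nv) p' =
      angle (‖p' - p‖⁻¹ • (p' - p)) p - angle p p' :=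
  angle_reflected_eq_general p p' nv hp' hne hn hnp'
end

section
/- Consider a billiard trajectory inside a cone with vertex at the origin, and assume additionally that p k and p (k+1) are linearly independent for every k. Then: (i) α (k+1) = α k − θ k for every k; (ii) θ k > 0 for every k, so the sequence (α k) is strictly decreasing; and (iii) (α k) converges to a limit α ≥ 0. (Lemma 2.3, part 1.) -/
/-!
The reflection at `p (k+1)` is in a hyperplane containing `p (k+1)`, so it does not change the
angle with `p (k+1)`: thus `α (k+1)` is the interior angle at `p (k+1)` of the triangle
`0, p k, p (k+1)`, while `α k` is its exterior angle at `p k`. The exterior angle theorem gives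
`α k = θ k + α (k+1)`, and linear independence makes the triangle nondegenerate, so `θ k > 0`.
Being decreasing and nonnegative, `α` converges.
-/

open InnerProductGeometry RealInnerProductSpace Filter

section

variable {V : Type*} [NormedAddCommGroup V] [InnerProductSpace ℝ V]

theorem InnerProductGeometry.angle_sub_two_inner_smul_left_of_inner_eq_zero {u ν q : V}
    (hν : ‖ν‖ = 1) (hνq : ⟪ν, q⟫ = 0) :
    angle (u - (2 * ⟪u, ν⟫) • ν) q = angle u q := by
  have hinner : ⟪u - (2 * ⟪u, ν⟫) • ν, q⟫ = ⟪u, q⟫ := by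
    rw [inner_sub_left, real_inner_smul_left, hνq, mul_zero, sub_zero]
  have hnorm : ‖u - (2 * ⟪u, ν⟫) • ν‖ = ‖u‖ := by
    have hsq : ‖u - (2 * ⟪u, ν⟫) • ν‖ ^ 2 = ‖u‖ ^ 2 := by
      rw [norm_sub_sq_real, real_inner_smul_right, norm_smul, mul_pow, hν, Real.norm_eq_abs,
        sq_abs]
      ring
    exact (sq_eq_sq₀ (norm_nonneg _) (norm_nonneg _)).mp hsq
  rw [angle, angle, hinner, hnorm]

theorem InnerProductGeometry.angle_sub_eq_angle_add_angle_sub (x : V) {y : V} (hy : y ≠ 0) :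
    angle x (y - x) = angle x y + angle y (y - x) := by
  have htriangle := angle_add_angle_sub_add_angle_sub_eq_pi x hy
  rw [← neg_sub y x, angle_neg_right] at htriangle
  linarith

theorem InnerProductGeometry.angle_pos_of_linearIndependent {x y : V}
    (h : LinearIndependent ℝ ![x, y]) : 0 < angle x y := by
  refine (angle_nonneg x y).lt_of_ne' fun hzero => ?_
  obtain ⟨-, r, -, rfl⟩ := angle_eq_zero_iff.mp hzero
  exact one_ne_zero (h.eq_zero_of_pair (s := -r) (t := 1) (by module)).2

end

theorem exists_nonneg_tendsto_of_antitone {f : ℕ → ℝ} (hf : Antitone f) (h0 : ∀ k, 0 ≤ f k) :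
    ∃ a : ℝ, 0 ≤ a ∧ Tendsto f atTop (nhds a) :=
  ⟨⨅ k, f k, le_ciInf h0, tendsto_atTop_ciInf hf ⟨0, Set.forall_mem_range.mpr h0⟩⟩

theorem billiard_cone_angles_general {n : ℕ}
    (p ν v : ℕ → EuclideanSpace ℝ (Fin n))
    (hp0 : ∀ k, p k ≠ 0) (hpne : ∀ k, p (k + 1) ≠ p k)
    (hν : ∀ k, ‖ν k‖ = 1) (hνp : ∀ k, ⟪ν k, p k⟫ = 0)
    (hv : ∀ k, v k = ‖p (k + 1) - p k‖⁻¹ • (p (k + 1) - p k))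
    (hrefl : ∀ k, v (k + 1) = v k - (2 * ⟪v k, ν (k + 1)⟫) • ν (k + 1))
    (hli : ∀ k, LinearIndependent ℝ ![p k, p (k + 1)])
    (α θ : ℕ → ℝ)
    (hα : ∀ k, α k = angle (v k) (p k))
    (hθ : ∀ k, θ k = angle (p k) (p (k + 1))) :
    (∀ k, α (k + 1) = α k - θ k) ∧ (∀ k, 0 < θ k) ∧ StrictAnti α ∧
      ∃ a : ℝ, 0 ≤ a ∧ Tendsto α atTop (nhds a) := by
  have hstep : ∀ k, α (k + 1) = α k - θ k := fun k => by
    have hpos : 0 < ‖p (k + 1) - p k‖⁻¹ :=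
      inv_pos.mpr (norm_pos_iff.mpr (sub_ne_zero.mpr (hpne k)))
    rw [hα, hα, hrefl, angle_sub_two_inner_smul_left_of_inner_eq_zero (hν _) (hνp _), hv,
      angle_smul_left_of_pos _ _ hpos, angle_smul_left_of_pos _ _ hpos,
      angle_comm _ (p (k + 1)), angle_comm _ (p k), angle_sub_eq_angle_add_angle_sub _ (hp0 (k + 1)),
      hθ]
    ring
  have hθpos : ∀ k, 0 < θ k := fun k => (hθ k).symm ▸ angle_pos_of_linearIndependent (hli k)
  have hanti : StrictAnti α := strictAnti_nat_of_succ_lt fun k => by linarith [hstep k, hθpos k]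
  exact ⟨hstep, hθpos, hanti,
    exists_nonneg_tendsto_of_antitone hanti.antitone fun k => (hα k).symm ▸ angle_nonneg _ _⟩

/-- Lemma 2.3, part 1: along a billiard trajectory inside a cone with vertex at
the origin, `α (k+1) = α k − θ k`, the angles `θ k` are positive, `α` is
strictly decreasing, and `α` converges to a limit `α ≥ 0`. -/
theorem billiard_cone_angles {n : ℕ} (hn : 2 ≤ n)
    (p ν v : ℕ → EuclideanSpace ℝ (Fin n))
    (hp0 : ∀ k, p k ≠ 0) (hpne : ∀ k, p (k + 1) ≠ p k)
    (hν : ∀ k, ‖ν k‖ = 1) (hνp : ∀ k, ⟪ν k, p k⟫ = 0)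
    (hv : ∀ k, v k = ‖p (k + 1) - p k‖⁻¹ • (p (k + 1) - p k))
    (hrefl : ∀ k, v (k + 1) = v k - (2 * ⟪v k, ν (k + 1)⟫) • ν (k + 1))
    (hvν : ∀ k, 0 < ⟪v k, ν k⟫)
    (hli : ∀ k, LinearIndependent ℝ ![p k, p (k + 1)])
    (α θ : ℕ → ℝ)
    (hα : ∀ k, α k = angle (v k) (p k))
    (hθ : ∀ k, θ k = angle (p k) (p (k + 1))) :
    (∀ k, α (k + 1) = α k - θ k) ∧ (∀ k, 0 < θ k) ∧ StrictAnti α ∧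
      ∃ a : ℝ, 0 ≤ a ∧ Tendsto α atTop (nhds a) :=
  billiard_cone_angles_general p ν v hp0 hpne hν hνp hv hrefl hli α θ hα hθ
end

section
/- Consider a billiard trajectory inside a cone with vertex at the origin, with p k and p (k+1) linearly independent for every k. Assume the last coordinate of each p k is positive, set q k := ((p k)ₙ)⁻¹ • p k (where (p k)ₙ denotes the last coordinate, so each q k has last coordinate 1), and assume there is a > 0 with ‖q k‖ ≤ a for all k. Then the series ∑ θ k and ∑ ‖q (k+1) − q k‖ both converge (i.e. the sequences (θ k) and (‖q (k+1) − q k‖) are summable). (Lemma 2.3, part 2.) -/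
open InnerProductGeometry RealInnerProductSpace

/-!
The reflection law preserves the inner product of the direction with the position vector (the
normal is orthogonal to it), so the reflection at `p (k + 1)` does not change the angle between
the direction and `p (k + 1)`. The angle sum in the triangle `0, p k, p (k + 1)` then gives
`α (k + 1) = α k - θ k` for `α k = angle (v k) (p k)`, whence `∑ θ k ≤ α 0`.
The points `q k` lie in the hyperplane `xₙ = 1`, at distance at least `1` from the origin, so
comparing two expressions for the area of the triangle `0, q k, q (k + 1)` gives
`‖q (k + 1) - q k‖ ≤ ‖q k‖ ‖q (k + 1)‖ sin θ k ≤ a² θ k`.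
-/

section

variable {V : Type*} [NormedAddCommGroup V] [InnerProductSpace ℝ V]

theorem angle_eq_angle_of_inner_eq_of_norm_eq {x y z : V} (hxy : ⟪x, z⟫ = ⟪y, z⟫)
    (hn : ‖x‖ = ‖y‖) : angle x z = angle y z := by
  unfold angle
  rw [hxy, hn]

theorem angle_add_smul_eq_angle_sub_angle {x v : V} (hx : x ≠ 0) {t : ℝ} (ht : 0 < t) :
    angle v (x + t • v) = angle v x - angle x (x + t • v) := by
  have h := angle_add_angle_sub_add_angle_sub_eq_pi (x + t • v) hx
  rw [add_sub_cancel_left, sub_add_cancel_left, angle_neg_right, angle_smul_right_of_pos _ _ ht,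
    angle_smul_right_of_pos _ _ ht, angle_comm (x + t • v) v, angle_comm (x + t • v) x,
    angle_comm x v] at h
  linarith

theorem billiard_angle_succ {p ν v : ℕ → V} (hp0 : ∀ k, p k ≠ 0)
    (hpne : ∀ k, p (k + 1) ≠ p k) (hνp : ∀ k, ⟪ν k, p k⟫ = 0)
    (hv : ∀ k, v k = ‖p (k + 1) - p k‖⁻¹ • (p (k + 1) - p k))
    (hrefl : ∀ k, v (k + 1) = v k - (2 * ⟪v k, ν (k + 1)⟫) • ν (k + 1)) (k : ℕ) :
    angle (v (k + 1)) (p (k + 1)) = angle (v k) (p k) - angle (p k) (p (k + 1)) := by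
  have hunit : ∀ j, ‖v j‖ = 1 := fun j => by
    rw [hv j]
    exact norm_smul_inv_norm (sub_ne_zero.mpr (hpne j))
  have hstep : p (k + 1) = p k + ‖p (k + 1) - p k‖ • v k := by
    rw [hv k, smul_inv_smul₀ (norm_ne_zero_iff.mpr (sub_ne_zero.mpr (hpne k))),
      add_sub_cancel]
  have hreflect : angle (v (k + 1)) (p (k + 1)) = angle (v k) (p (k + 1)) := by
    refine angle_eq_angle_of_inner_eq_of_norm_eq ?_ (by rw [hunit, hunit])
    rw [hrefl k, inner_sub_left, real_inner_smul_left, hνp (k + 1), mul_zero, sub_zero]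
  rw [hreflect, hstep]
  exact angle_add_smul_eq_angle_sub_angle (hp0 k)
    (norm_pos_iff.mpr (sub_ne_zero.mpr (hpne k)))

theorem norm_sub_le_mul_sin_angle_of_inner_eq_one {e x y : V} (he : ‖e‖ ≤ 1)
    (hx : ⟪e, x⟫ = 1) (hy : ⟪e, y⟫ = 1) :
    ‖y - x‖ ≤ ‖x‖ * ‖y‖ * Real.sin (angle x y) := by
  set d := y - x
  set G := ‖x‖ ^ 2 * ‖y‖ ^ 2 - ⟪x, y⟫ ^ 2
  have hG : G = ‖x‖ ^ 2 * ‖d‖ ^ 2 - ⟪x, d⟫ ^ 2 := by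
    simp only [G, d, ← real_inner_self_eq_norm_sq, inner_sub_left, inner_sub_right,
      real_inner_comm x y]
    ring
  -- Cauchy–Schwarz against `e` for the component `w` of `‖d‖² x` orthogonal to `d`.
  set w := ‖d‖ ^ 2 • x - ⟪x, d⟫ • d
  have hed : ⟪e, d⟫ = 0 := by rw [inner_sub_right, hx, hy, sub_self]
  have hew : ⟪e, w⟫ = ‖d‖ ^ 2 := by
    simp only [w, inner_sub_right, real_inner_smul_right, hx, hed]
    ring
  have hw : ‖w‖ ^ 2 = ‖d‖ ^ 2 * G := by
    simp only [hG, w, ← real_inner_self_eq_norm_sq, inner_sub_left, inner_sub_right,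
      real_inner_smul_left, real_inner_smul_right, real_inner_comm x d]
    ring
  have hcs : ‖d‖ ^ 2 * ‖d‖ ^ 2 ≤ ‖d‖ ^ 2 * G := by
    have h := abs_real_inner_le_norm e w
    rw [hew, abs_of_nonneg (by positivity)] at h
    nlinarith [hw, norm_nonneg e, norm_nonneg w, mul_le_of_le_one_left (norm_nonneg w) he]
  have hdG : ‖d‖ ^ 2 ≤ G := by
    rcases eq_or_lt_of_le (sq_nonneg ‖d‖) with h0 | hpos
    · rw [← h0]
      nlinarith [abs_real_inner_le_norm x y, abs_nonneg ⟪x, y⟫, sq_abs ⟪x, y⟫,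
        norm_nonneg x, norm_nonneg y]
    · exact le_of_mul_le_mul_left hcs hpos
  have hsin : ‖x‖ * ‖y‖ * Real.sin (angle x y) = √G := by
    rw [mul_comm, sin_angle_mul_norm_mul_norm, real_inner_self_eq_norm_sq,
      real_inner_self_eq_norm_sq, ← sq]
  rw [hsin, Real.le_sqrt (norm_nonneg d) ((sq_nonneg _).trans hdG)]
  exact hdG

end

theorem EuclideanSpace.norm_sub_le_mul_sin_angle_of_apply_eq_one {ι : Type*} [Fintype ι]
    [DecidableEq ι] {x y : EuclideanSpace ℝ ι} {i : ι} (hx : x i = 1) (hy : y i = 1) :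
    ‖y - x‖ ≤ ‖x‖ * ‖y‖ * Real.sin (angle x y) := by
  have he : ∀ z : EuclideanSpace ℝ ι, ⟪EuclideanSpace.single i 1, z⟫ = z i := fun z => by
    simp [EuclideanSpace.inner_single_left]
  refine norm_sub_le_mul_sin_angle_of_inner_eq_one (e := EuclideanSpace.single i 1) ?_ ?_ ?_
  · simp
  · rw [he, hx]
  · rw [he, hy]

theorem summable_of_nonneg_of_succ_eq_sub {f g : ℕ → ℝ} (hf : ∀ k, 0 ≤ f k)
    (hg : ∀ k, 0 ≤ g k) (h : ∀ k, g (k + 1) = g k - f k) : Summable f := by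
  refine summable_of_sum_range_le (c := g 0) hf fun N => ?_
  have hfg : ∀ k, f k = g k - g (k + 1) := fun k => by linarith [h k]
  rw [Finset.sum_congr rfl fun k _ => hfg k, Finset.sum_range_sub']
  linarith [hg N]

/-- Lemma 2.3, part 2: along a billiard trajectory inside a cone with vertex at
the origin over a bounded base `γ ⊂ {xⁿ = 1}`, the series `∑ θ k` and
`∑ ‖q (k+1) − q k‖` converge. -/
theorem billiard_cone_summable {n : ℕ} (hn : 2 ≤ n)
    (p ν v : ℕ → EuclideanSpace ℝ (Fin n))
    (hp0 : ∀ k, p k ≠ 0) (hpne : ∀ k, p (k + 1) ≠ p k)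
    (hνp : ∀ k, ⟪ν k, p k⟫ = 0)
    (hv : ∀ k, v k = ‖p (k + 1) - p k‖⁻¹ • (p (k + 1) - p k))
    (hrefl : ∀ k, v (k + 1) = v k - (2 * ⟪v k, ν (k + 1)⟫) • ν (k + 1))
    (θ : ℕ → ℝ) (hθ : ∀ k, θ k = angle (p k) (p (k + 1)))
    (hlast : ∀ k, 0 < p k ⟨n - 1, by omega⟩)
    (q : ℕ → EuclideanSpace ℝ (Fin n))
    (hq : ∀ k, q k = (p k ⟨n - 1, by omega⟩)⁻¹ • p k)
    (a : ℝ) (hqa : ∀ k, ‖q k‖ ≤ a) :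
    Summable θ ∧ Summable (fun k => ‖q (k + 1) - q k‖) := by
  have hθ0 : ∀ k, 0 ≤ θ k := fun k => hθ k ▸ angle_nonneg _ _
  have hθsum : Summable θ :=
    summable_of_nonneg_of_succ_eq_sub hθ0 (fun k => angle_nonneg (v k) (p k))
      fun k => hθ k ▸ billiard_angle_succ hp0 hpne hνp hv hrefl k
  refine ⟨hθsum,
    (hθsum.mul_left (a ^ 2)).of_nonneg_of_le (fun _ => norm_nonneg _) fun k => ?_⟩
  have hq1 : ∀ j, q j ⟨n - 1, by omega⟩ = 1 := fun j => by
    rw [hq j, PiLp.smul_apply, smul_eq_mul, inv_mul_cancel₀ (hlast j).ne']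
  have hqθ : angle (q k) (q (k + 1)) = θ k := by
    rw [hq, hq, angle_smul_left_of_pos _ _ (inv_pos.mpr (hlast k)),
      angle_smul_right_of_pos _ _ (inv_pos.mpr (hlast (k + 1))), hθ]
  calc ‖q (k + 1) - q k‖ ≤ ‖q k‖ * ‖q (k + 1)‖ * Real.sin (θ k) := by
        rw [← hqθ]
        exact EuclideanSpace.norm_sub_le_mul_sin_angle_of_apply_eq_one (hq1 k) (hq1 (k + 1))
    _ ≤ a * a * θ k := by
        have ha : 0 ≤ a := (norm_nonneg _).trans (hqa k)
        exact mul_le_mul (mul_le_mul (hqa k) (hqa (k + 1)) (norm_nonneg _) ha)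
          (Real.sin_le (hθ0 k)) (hqθ ▸ sin_angle_nonneg _ _) (mul_nonneg ha ha)
    _ = a ^ 2 * θ k := by ring
end

section
/- Consider a billiard trajectory inside a cone with vertex at the origin, with p k and p (k+1) linearly independent for every k, and assume additionally that p 0 and v 0 are linearly independent; set R := √(‖p 0‖² − ⟨p 0, v 0⟩²) > 0 (the distance from the first line of the trajectory to the origin). Assume the last coordinate of each p k is positive, set q k := ((p k)ₙ)⁻¹ • p k, and assume there is a > 0 with ‖q k‖ ≤ a for all k. Let α := lim α k (which exists by part 1 of Lemma 2.3). Then: (i) sin(α k) · ‖p k‖ = R for every k; (ii) if α > 0 then the sequence (p k) converges to some point p ∈ ℝⁿ with p ≠ 0; (iii) if α = 0 then ‖p k‖ → +∞. (Lemma 2.3, part 4.) -/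
open InnerProductGeometry RealInnerProductSpace Filter

/-!
Reflecting at `p (k+1)` changes `v k` only along the normal `ν (k+1)`, which is orthogonal to
`p (k+1)`. Hence the parameter `t k := ⟪p k, v k⟫` of `p k` on its line grows by exactly the step
length `‖p (k+1) - p k‖`, and the distance `√(‖p k‖² - t k²) = sin (α k) · ‖p k‖` from the origin
to the `k`-th line never changes: it is `R`, positive because `p 0` and `v 0` are independent.
If `α k → 0` then `‖p k‖ = R / sin (α k) → ∞`. The limit `π` is impossible, since then
`t k = ‖p k‖ · cos (α k) → -∞` although `t` increases. For a limit in `(0, π)` the norms `‖p k‖`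
stay bounded, so the total length `∑ ‖p (k+1) - p k‖ ≤ sup ‖p k‖ - t 0` is finite and `p` is Cauchy.
-/

open Topology

section InnerProduct

variable {E : Type*} [NormedAddCommGroup E] [InnerProductSpace ℝ E]

lemma real_inner_sq_lt_of_linearIndependent {x y : E} (h : LinearIndependent ℝ ![x, y]) :
    ⟪x, y⟫ ^ 2 < ‖x‖ ^ 2 * ‖y‖ ^ 2 := by
  have hx : x ≠ 0 := by simpa using h.ne_zero 0
  have hy : y ≠ 0 := by simpa using h.ne_zero 1
  have hlt : |⟪x, y⟫| < ‖x‖ * ‖y‖ := by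
    refine (abs_real_inner_le_norm x y).lt_of_ne fun heq => ?_
    obtain ⟨r, -, rfl⟩ := (norm_inner_eq_norm_iff (𝕜 := ℝ) hx hy).1 heq
    have := LinearIndependent.pair_iff.1 h r (-1) (by simp)
    norm_num at this
  rw [← mul_pow, ← sq_abs]
  exact pow_lt_pow_left₀ hlt (abs_nonneg _) two_ne_zero

lemma inner_sub_smul_right_of_inner_eq_zero {x w u : E} (h : ⟪u, x⟫ = 0) (t : ℝ) :
    ⟪x, w - t • u⟫ = ⟪x, w⟫ := by
  rw [inner_sub_right, real_inner_smul_right, real_inner_comm u, h, mul_zero, sub_zero]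

lemma norm_sq_sub_inner_sq_add_smul {v : E} (hv : ‖v‖ = 1) (x : E) (t : ℝ) :
    ‖x + t • v‖ ^ 2 - ⟪x + t • v, v⟫ ^ 2 = ‖x‖ ^ 2 - ⟪x, v⟫ ^ 2 := by
  rw [norm_add_sq_real, norm_smul, inner_add_left, real_inner_smul_left, real_inner_smul_right,
    real_inner_self_eq_norm_sq, hv, Real.norm_eq_abs, mul_pow, sq_abs]
  ring

lemma sin_angle_mul_norm_of_norm_eq_one {v : E} (hv : ‖v‖ = 1) (x : E) :
    Real.sin (angle v x) * ‖x‖ = √(‖x‖ ^ 2 - ⟪x, v⟫ ^ 2) := by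
  have h := sin_angle_mul_norm_mul_norm v x
  rwa [hv, one_mul, real_inner_self_eq_norm_sq, real_inner_self_eq_norm_sq, hv, one_pow, one_mul,
    real_inner_comm, ← sq] at h

lemma cos_angle_mul_norm_of_norm_eq_one {v : E} (hv : ‖v‖ = 1) (x : E) :
    ‖x‖ * Real.cos (angle v x) = ⟪x, v⟫ := by
  rw [mul_comm, ← one_mul ‖x‖, ← hv, cos_angle_mul_norm_mul_norm, real_inner_comm]

end InnerProduct

lemma cauchySeq_of_dist_le_sub_of_le {X : Type*} [PseudoMetricSpace X] {p : ℕ → X}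
    {c : ℕ → ℝ} {C : ℝ} (hd : ∀ k, dist (p k) (p (k + 1)) ≤ c (k + 1) - c k)
    (hC : ∀ k, c k ≤ C) : CauchySeq p := by
  refine cauchySeq_of_summable_dist
    (summable_of_sum_range_le (c := C - c 0) (fun _ => dist_nonneg) fun N => ?_)
  calc ∑ i ∈ Finset.range N, dist (p i) (p (i + 1))
      ≤ ∑ i ∈ Finset.range N, (c (i + 1) - c i) := Finset.sum_le_sum fun i _ => hd i
    _ = c N - c 0 := Finset.sum_range_sub c N
    _ ≤ C - c 0 := by linarith [hC N]

lemma tendsto_atTop_of_mul_eq_of_tendsto_zero {ι : Type*} {l : Filter ι} {f g : ι → ℝ} {R : ℝ}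
    (hR : 0 < R) (hg : ∀ i, 0 ≤ g i) (hfg : ∀ i, f i * g i = R) (hf : Tendsto f l (𝓝 0)) :
    Tendsto g l atTop := by
  have hfpos : ∀ i, 0 < f i := fun i => pos_of_mul_pos_left ((hfg i).symm ▸ hR) (hg i)
  have hinv : Tendsto f⁻¹ l atTop :=
    (tendsto_nhdsWithin_of_tendsto_nhds_of_eventually_within _ hf
      (Eventually.of_forall hfpos)).inv_tendsto_nhdsGT_zero
  refine (hinv.const_mul_atTop hR).congr fun i => ?_
  rw [← hfg i, Pi.inv_apply, mul_comm (f i), mul_assoc, mul_inv_cancel₀ (hfpos i).ne', mul_one]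

section Billiard

variable {E : Type*} [NormedAddCommGroup E] [InnerProductSpace ℝ E]

/-- The cone enters only through `inner_normal`: its normal at `p k` is orthogonal to `p k`. -/
structure IsConeBilliard (p ν v : ℕ → E) : Prop where
  succ_ne : ∀ k, p (k + 1) ≠ p k
  inner_normal : ∀ k, ⟪ν k, p k⟫ = 0
  dir_eq : ∀ k, v k = ‖p (k + 1) - p k‖⁻¹ • (p (k + 1) - p k)
  reflect : ∀ k, v (k + 1) = v k - (2 * ⟪v k, ν (k + 1)⟫) • ν (k + 1)

namespace IsConeBilliard

variable {p ν v : ℕ → E}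

lemma norm_dir (h : IsConeBilliard p ν v) (k : ℕ) : ‖v k‖ = 1 := by
  rw [h.dir_eq k]
  exact norm_smul_inv_norm (sub_ne_zero.2 (h.succ_ne k))

lemma succ_eq (h : IsConeBilliard p ν v) (k : ℕ) :
    p (k + 1) = p k + ‖p (k + 1) - p k‖ • v k := by
  rw [h.dir_eq k, smul_inv_smul₀ (norm_ne_zero_iff.2 (sub_ne_zero.2 (h.succ_ne k))),
    add_sub_cancel]

lemma inner_succ_dir_succ (h : IsConeBilliard p ν v) (k : ℕ) :
    ⟪p (k + 1), v (k + 1)⟫ = ⟪p (k + 1), v k⟫ := by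
  rw [h.reflect k, inner_sub_smul_right_of_inner_eq_zero (h.inner_normal (k + 1))]

lemma inner_succ (h : IsConeBilliard p ν v) (k : ℕ) :
    ⟪p (k + 1), v (k + 1)⟫ = ⟪p k, v k⟫ + ‖p (k + 1) - p k‖ := by
  rw [h.inner_succ_dir_succ k]
  conv_lhs => rw [h.succ_eq k]
  rw [inner_add_left, real_inner_smul_left, real_inner_self_eq_norm_sq, h.norm_dir k, one_pow,
    mul_one]

lemma inner_monotone (h : IsConeBilliard p ν v) : Monotone fun k => ⟪p k, v k⟫ :=
  monotone_nat_of_le_succ fun k => by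
    rw [h.inner_succ k]
    exact le_add_of_nonneg_right (norm_nonneg _)

lemma norm_sq_sub_inner_sq (h : IsConeBilliard p ν v) (k : ℕ) :
    ‖p k‖ ^ 2 - ⟪p k, v k⟫ ^ 2 = ‖p 0‖ ^ 2 - ⟪p 0, v 0⟫ ^ 2 := by
  induction k with
  | zero => rfl
  | succ k ih =>
    rw [← ih, h.inner_succ_dir_succ k, h.succ_eq k]
    exact norm_sq_sub_inner_sq_add_smul (h.norm_dir k) _ _

lemma sin_angle_mul_norm (h : IsConeBilliard p ν v) (k : ℕ) :
    Real.sin (angle (v k) (p k)) * ‖p k‖ = √(‖p 0‖ ^ 2 - ⟪p 0, v 0⟫ ^ 2) := by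
  rw [sin_angle_mul_norm_of_norm_eq_one (h.norm_dir k), h.norm_sq_sub_inner_sq k]

lemma impact_pos (h : IsConeBilliard p ν v) (hli0 : LinearIndependent ℝ ![p 0, v 0]) :
    0 < √(‖p 0‖ ^ 2 - ⟪p 0, v 0⟫ ^ 2) := by
  have hlt := real_inner_sq_lt_of_linearIndependent hli0
  rw [h.norm_dir 0, one_pow, mul_one] at hlt
  exact Real.sqrt_pos.2 (sub_pos.2 hlt)

lemma cauchySeq (h : IsConeBilliard p ν v) {C : ℝ} (hC : ∀ k, ‖p k‖ ≤ C) : CauchySeq p := by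
  refine cauchySeq_of_dist_le_sub_of_le (c := fun k => ⟪p k, v k⟫) (C := C) (fun k => ?_)
    fun k => ?_
  · rw [h.inner_succ k, dist_comm, dist_eq_norm, add_sub_cancel_left]
  · calc ⟪p k, v k⟫ ≤ ‖p k‖ * ‖v k‖ := real_inner_le_norm _ _
      _ ≤ C := by rw [h.norm_dir k, mul_one]; exact hC k

lemma exists_tendsto_of_tendsto_norm [CompleteSpace E] (h : IsConeBilliard p ν v) {r : ℝ}
    (hr : 0 < r) (hnorm : Tendsto (fun k => ‖p k‖) atTop (𝓝 r)) :
    ∃ plim : E, plim ≠ 0 ∧ Tendsto p atTop (𝓝 plim) := by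
  obtain ⟨C, hC⟩ := hnorm.bddAbove_range
  obtain ⟨plim, hplim⟩ := cauchySeq_tendsto_of_complete (h.cauchySeq fun k => hC ⟨k, rfl⟩)
  refine ⟨plim, fun h0 => hr.ne' ?_, hplim⟩
  exact tendsto_nhds_unique hnorm (by simpa [h0] using hplim.norm)

lemma angle_limit_ne_pi (h : IsConeBilliard p ν v) (hli0 : LinearIndependent ℝ ![p 0, v 0])
    {αl : ℝ} (hαl : Tendsto (fun k => angle (v k) (p k)) atTop (𝓝 αl)) : αl ≠ Real.pi := by
  rintro rfl
  have hnorm : Tendsto (fun k => ‖p k‖) atTop atTop :=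
    tendsto_atTop_of_mul_eq_of_tendsto_zero (h.impact_pos hli0) (fun _ => norm_nonneg _)
      h.sin_angle_mul_norm
      (by simpa [Function.comp_def] using (Real.continuous_sin.tendsto _).comp hαl)
  have hcos : Tendsto (fun k => Real.cos (angle (v k) (p k))) atTop (𝓝 (-1)) := by
    simpa [Function.comp_def] using (Real.continuous_cos.tendsto _).comp hαl
  have hbot : Tendsto (fun k => ⟪p k, v k⟫) atTop atBot :=
    (hnorm.atTop_mul_neg (by norm_num) hcos).congr fun k =>
      cos_angle_mul_norm_of_norm_eq_one (h.norm_dir k) _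
  obtain ⟨k, hk⟩ := (hbot.eventually (eventually_lt_atBot ⟪p 0, v 0⟫)).exists
  exact hk.not_ge (h.inner_monotone (Nat.zero_le k))

end IsConeBilliard

end Billiard

theorem billiard_cone_p_limit {n : ℕ}
    (p ν v : ℕ → EuclideanSpace ℝ (Fin n))
    (hpne : ∀ k, p (k + 1) ≠ p k)
    (hνp : ∀ k, ⟪ν k, p k⟫ = 0)
    (hv : ∀ k, v k = ‖p (k + 1) - p k‖⁻¹ • (p (k + 1) - p k))
    (hrefl : ∀ k, v (k + 1) = v k - (2 * ⟪v k, ν (k + 1)⟫) • ν (k + 1))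
    (hli0 : LinearIndependent ℝ ![p 0, v 0])
    (R : ℝ) (hR : R = Real.sqrt (‖p 0‖ ^ 2 - ⟪p 0, v 0⟫ ^ 2))
    (α : ℕ → ℝ) (hα : ∀ k, α k = angle (v k) (p k))
    (αl : ℝ) (hαl : Tendsto α atTop (nhds αl)) :
    0 < R ∧ (∀ k, Real.sin (α k) * ‖p k‖ = R) ∧
      (0 < αl → ∃ plim : EuclideanSpace ℝ (Fin n),
        plim ≠ 0 ∧ Tendsto p atTop (nhds plim)) ∧
      (αl = 0 → Tendsto (fun k => ‖p k‖) atTop atTop) := by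
  obtain rfl : α = fun k => angle (v k) (p k) := funext hα
  have h : IsConeBilliard p ν v := ⟨hpne, hνp, hv, hrefl⟩
  have hRpos : 0 < R := by rw [hR]; exact h.impact_pos hli0
  have hsin : ∀ k, Real.sin (angle (v k) (p k)) * ‖p k‖ = R := by
    rw [hR]; exact h.sin_angle_mul_norm
  have hsint : Tendsto (fun k => Real.sin (angle (v k) (p k))) atTop (𝓝 (Real.sin αl)) :=
    (Real.continuous_sin.tendsto αl).comp hαl
  refine ⟨hRpos, hsin, fun hpos => ?_, fun hzero => ?_⟩
  · have hlt : αl < Real.pi := (le_of_tendsto' hαl fun k => angle_le_pi _ _).lt_of_ne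
      (h.angle_limit_ne_pi hli0 hαl)
    have hs := Real.sin_pos_of_pos_of_lt_pi hpos hlt
    refine h.exists_tendsto_of_tendsto_norm (div_pos hRpos hs) ?_
    refine (tendsto_const_nhds.div hsint hs.ne').congr fun k => ?_
    have hsk : Real.sin (angle (v k) (p k)) ≠ 0 :=
      left_ne_zero_of_mul ((hsin k).trans_ne hRpos.ne')
    show R / _ = _
    rw [← hsin k, mul_div_cancel_left₀ _ hsk]
  · exact tendsto_atTop_of_mul_eq_of_tendsto_zero hRpos (fun _ => norm_nonneg _) hsin
      (by simpa [hzero] using hsint)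
end

section
/- (Weierstrass) Let a : ℕ → ℝ be a sequence of nonzero real numbers and define b : ℕ → ℝ by a (k+1) / a k = 1 + b k, i.e. b k := a (k+1) / a k − 1. If the series ∑ |b k| converges (i.e. the sequence (|b k|) is summable), then the series ∑ a k diverges (i.e. (a k) is not summable). -/
/-!
Since `log (1 + b k) = log |a (k+1)| - log |a k|` and `∑ b k` converges absolutely, the series
`∑ log (1 + b k)` converges, so its partial sums `log |a n| - log |a 0|` have a finite limit.
If `∑ a k` converged, `a n → 0` with `a n ≠ 0` would force `log |a n| → -∞`.
-/

open Filter Topology Real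

theorem HasSum.tendsto_of_sub_succ {G : Type*} [AddCommGroup G] [TopologicalSpace G]
    [IsTopologicalAddGroup G] {u : ℕ → G} {s : G} (h : HasSum (fun k => u (k + 1) - u k) s) :
    Tendsto u atTop (𝓝 (s + u 0)) := by
  have hpartial := h.tendsto_sum_nat.add_const (u 0)
  simp only [Finset.sum_range_sub, sub_add_cancel] at hpartial
  exact hpartial

theorem Real.tendsto_log_atBot_of_tendsto_zero {α : Type*} {l : Filter α} {f : α → ℝ}
    (h0 : Tendsto f l (𝓝 0)) (hne : ∀ᶠ x in l, f x ≠ 0) :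
    Tendsto (fun x => log (f x)) l atBot :=
  tendsto_log_nhdsNE_zero.comp (tendsto_nhdsWithin_iff.mpr ⟨h0, hne⟩)

/-- Weierstrass: if `a k ≠ 0` for all `k` and `b k := a (k+1) / a k − 1`
satisfies `∑ |b k| < ∞`, then the series `∑ a k` diverges. -/
theorem weierstrass_not_summable (a b : ℕ → ℝ)
    (ha : ∀ k, a k ≠ 0)
    (hb : ∀ k, b k = a (k + 1) / a k - 1)
    (hsum : Summable fun k => |b k|) :
    ¬ Summable a := by
  intro hS
  have hlog : Summable fun k => log (a (k + 1)) - log (a k) :=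
    (summable_log_one_add_of_summable hsum.of_abs).congr fun k => by
      rw [hb, add_sub_cancel, log_div (ha _) (ha _)]
  obtain ⟨s, hs⟩ := hlog
  have hbot : Tendsto (fun n => log (a n)) atTop atBot :=
    tendsto_log_atBot_of_tendsto_zero hS.tendsto_atTop_zero (.of_forall ha)
  exact not_tendsto_nhds_of_tendsto_atBot hbot _ (hs.tendsto_of_sub_succ (u := fun n => log (a n)))
end

section
/- Let v, n, Q₂ ∈ ℝⁿ with ‖v‖ = 1, ‖n‖ = 1 and ⟨Q₂, n⟩ = 0. Set ṽ := v − 2⟨v, n⟩ • n, Q := Q₂ − ⟨Q₂, v⟩ • v, and Q̃ := Q₂ − ⟨Q₂, ṽ⟩ • ṽ. Then Q̃ = Q − 2⟨Q, n⟩ • n. (Under billiard reflection at a point Q₂ of a cone with vertex at the origin, the closest point to the origin on the reflected line is obtained from the closest point on the incoming line by reflecting it in the tangent hyperplane; this computation yields the formula σ(v, Q) = (v, Q − 2⟨Q, n_v⟩ n_v) for the boundary map in Lemma 3.4.) -/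
open RealInnerProductSpace

/-- Under billiard reflection at a point `Q₂` of a cone with vertex at the
origin, the closest point to the origin on the reflected line is the
reflection of the closest point on the incoming line in the tangent
hyperplane: `Q̃ = Q − 2⟪Q, n⟫ • n`. -/
theorem reflected_closest_point {n : ℕ} (v nv Q₂ : EuclideanSpace ℝ (Fin n))
    (hv : ‖v‖ = 1) (hn : ‖nv‖ = 1) (hQn : ⟪Q₂, nv⟫ = 0) :
    Q₂ - ⟪Q₂, v - (2 * ⟪v, nv⟫) • nv⟫ • (v - (2 * ⟪v, nv⟫) • nv) =
      (Q₂ - ⟪Q₂, v⟫ • v) - (2 * ⟪Q₂ - ⟪Q₂, v⟫ • v, nv⟫) • nv := by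
  simp only [inner_sub_left, inner_sub_right, inner_smul_left, inner_smul_right,
    RCLike.ofReal_real_eq_id, id, hQn, conj_trivial, real_inner_comm nv v]
  match_scalars <;> ring
end
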